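/- (Theorem 4.8, direct part) Let λ, μ ∈ ℝ satisfy 1 − (1 + λ²)ζ′(s)² > 0 for all s ∈ [0,L]. Set σ_λ(s) := √(1 − (1 + λ²)ζ′(s)²), c_{λ,μ}(s) := (μ + ∫₀ˢ σ_λ(w) dw, ζ(s), λζ(s)), and ξ_λ := (1/(1 + λ²))·(0, λ² − 1, −2λ). Then: (a) ‖c_{λ,μ}′(s)‖ = 1 for all s ∈ [0,L]; (b) ‖ξ_λ‖ = 1 and ⟨c_{λ,μ}′(s), ξ_λ⟩ = −ζ′(s) = ⟨c_{λ,μ}′(s), (0,−1,0)⟩ for all s, so both ruled surfaces p_λ(s,v) := c_{λ,μ}(s) + v·ξ_λ and q_λ(s,v) := c_{λ,μ}(s) + v·(0,−1,0) have first fundamental form g = ds² − 2ζ′(s) ds dv + dv²; (c) the second and third components of c_{λ,μ}(0) and c_{λ,μ}(L) vanish (the endpoints lie on the x-axis); (d) for λ = 1, μ = 0 one has c_{1,0} = c and ξ_1 = (0,0,−1) (recovering the origami parametrization X), and for λ = 0, μ = 0 one has c_{0,0} = γ and ξ_0 = (0,−1,0) (recovering the developing map Y). -/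

import Mathlib

open Real Set

noncomputable section

/-- Euclidean 3-space. -/
abbrev E3 : Type := EuclideanSpace ℝ (Fin 3)

/-- The vector `(x, y, z)` in `ℝ³`. -/
def v3 (x y z : ℝ) : E3 := WithLp.toLp 2 ![x, y, z]

/-- The cross product in `ℝ³`. -/
def cross3 (u w : E3) : E3 :=
  v3 (u 1 * w 2 - u 2 * w 1) (u 2 * w 0 - u 0 * w 2) (u 0 * w 1 - u 1 * w 0)

/-- `σ(s) = √(1 − 2 ζ′(s)²)`. -/
def sig (ζ : ℝ → ℝ) (s : ℝ) : ℝ := Real.sqrt (1 - 2 * (deriv ζ s) ^ 2)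

/-- The crease `c(s) = (∫₀ˢ σ(w) dw, ζ(s), ζ(s))`. -/
def crease (ζ : ℝ → ℝ) (s : ℝ) : E3 :=
  v3 (∫ w in (0:ℝ)..s, sig ζ w) (ζ s) (ζ s)

/-- The crease pattern `γ(s) = (∫₀ˢ √(1 − ζ′(w)²) dw, ζ(s), 0)`. -/
def pattern (ζ : ℝ → ℝ) (s : ℝ) : E3 :=
  v3 (∫ w in (0:ℝ)..s, Real.sqrt (1 - (deriv ζ w) ^ 2)) (ζ s) 0

/-- The curvature `κ(s) = ‖c″(s)‖` of a space curve. -/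
def curv (c : ℝ → E3) (s : ℝ) : ℝ := ‖deriv (deriv c) s‖

/-- The principal normal `N(s) = c″(s)/κ(s)` of a space curve. -/
def nvec (c : ℝ → E3) (s : ℝ) : E3 := (curv c s)⁻¹ • deriv (deriv c) s

/-- The binormal `B(s) = c′(s) × N(s)` of a space curve. -/
def bvec (c : ℝ → E3) (s : ℝ) : E3 := cross3 (deriv c s) (nvec c s)

/-- `σ_λ(s) = √(1 − (1 + λ²) ζ′(s)²)`. -/
def sigL (ζ : ℝ → ℝ) (lam s : ℝ) : ℝ :=
  Real.sqrt (1 - (1 + lam ^ 2) * (deriv ζ s) ^ 2)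

/-- The deformed crease `c_{λ,μ}(s) = (μ + ∫₀ˢ σ_λ(w) dw, ζ(s), λζ(s))`. -/
def creaseL (ζ : ℝ → ℝ) (lam mu s : ℝ) : E3 :=
  v3 (mu + ∫ w in (0:ℝ)..s, sigL ζ lam w) (ζ s) (lam * ζ s)

/-- The deformed ruling direction `ξ_λ = (1/(1+λ²))·(0, λ² − 1, −2λ)`. -/
def xiL (lam : ℝ) : E3 := (1 + lam ^ 2)⁻¹ • v3 0 (lam ^ 2 - 1) (-(2 * lam))

/-- Standard basis vectors. -/
def E3b (i : Fin 3) : E3 := EuclideanSpace.single i 1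

lemma v3_decomp (x y z : ℝ) : v3 x y z = x • E3b 0 + y • E3b 1 + z • E3b 2 := by
  ext i
  fin_cases i <;>
    simp [v3, E3b, EuclideanSpace.single_apply, PiLp.add_apply, PiLp.smul_apply]

lemma hasDerivAt_v3 (f g h : ℝ → ℝ) (f' g' h' s : ℝ) (hf : HasDerivAt f f' s)
    (hg : HasDerivAt g g' s) (hh : HasDerivAt h h' s) :
    HasDerivAt (fun t => v3 (f t) (g t) (h t)) (v3 f' g' h') s := by
  simp only [v3_decomp]
  exact ((hf.smul_const _).add (hg.smul_const _)).add (hh.smul_const _)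

/-- Theorem 4.8, direct part: the curves `c_{λ,μ}` with rulings `ξ_λ`
and `(0,−1,0)` give quarter origami deformations: (a) `c_{λ,μ}` is unit speed;
(b) both deformed ruled pieces have first fundamental form `g`; (c) the endpoints of
`c_{λ,μ}` lie on the `x`-axis; (d) for `λ = 1, μ = 0` one recovers the origami
parametrization, and for `λ = 0, μ = 0` the developing map. -/
theorem deformed_crease_properties
    (b L : ℝ) (hb : 0 < b) (hL : 0 < L) (ζ : ℝ → ℝ) (hζ : ContDiff ℝ (⊤ : ℕ∞) ζ)
    (hζ0 : ζ 0 = 0) (hζL : ζ L = 0)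
    (hslope : ∀ s ∈ Set.Icc (0:ℝ) L, 0 < 1 - 2 * (deriv ζ s) ^ 2)
    (hrange : ∀ s ∈ Set.Ioo (0:ℝ) L, 0 < ζ s ∧ ζ s < b)
    (hconc : ∀ s ∈ Set.Ioo (0:ℝ) L, deriv (deriv ζ) s < 0)
    (lam mu : ℝ)
    (hlam : ∀ s ∈ Set.Icc (0:ℝ) L, 0 < 1 - (1 + lam ^ 2) * (deriv ζ s) ^ 2) :
    (∀ s ∈ Set.Icc (0:ℝ) L, ‖deriv (creaseL ζ lam mu) s‖ = 1) ∧
    (‖xiL lam‖ = 1 ∧ ∀ s ∈ Set.Icc (0:ℝ) L,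
      (inner ℝ (deriv (creaseL ζ lam mu) s) (xiL lam) : ℝ) = -(deriv ζ s) ∧
      (inner ℝ (deriv (creaseL ζ lam mu) s) (v3 0 (-1) 0) : ℝ) = -(deriv ζ s)) ∧
    (creaseL ζ lam mu 0 1 = 0 ∧ creaseL ζ lam mu 0 2 = 0 ∧
      creaseL ζ lam mu L 1 = 0 ∧ creaseL ζ lam mu L 2 = 0) ∧
    ((lam = 1 ∧ mu = 0 →
        (∀ s : ℝ, creaseL ζ lam mu s = crease ζ s) ∧ xiL lam = v3 0 0 (-1)) ∧
      (lam = 0 ∧ mu = 0 →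
        (∀ s : ℝ, creaseL ζ lam mu s = pattern ζ s) ∧ xiL lam = v3 0 (-1) 0)) := by
  have hζd : Differentiable ℝ ζ := hζ.differentiable (by simp)
  have hcd : Continuous (deriv ζ) := hζ.continuous_deriv (by simp)
  have hcs : Continuous (sigL ζ lam) :=
    (continuous_const.sub ((continuous_const.mul (hcd.pow 2)))).sqrt
  have hlam1 : (0:ℝ) < 1 + lam ^ 2 := by positivity
  -- derivative of creaseL
  have hder : ∀ s : ℝ, HasDerivAt (creaseL ζ lam mu)
      (v3 (sigL ζ lam s) (deriv ζ s) (lam * deriv ζ s)) s := by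
    intro s
    have hint : HasDerivAt (fun t => ∫ w in (0:ℝ)..t, sigL ζ lam w) (sigL ζ lam s) s :=
      intervalIntegral.integral_hasDerivAt_right (hcs.intervalIntegrable _ _)
        (hcs.stronglyMeasurableAtFilter _ _) hcs.continuousAt
    exact hasDerivAt_v3 _ _ _ _ _ _ s (hint.const_add mu) (hζd s).hasDerivAt
      (((hζd s).hasDerivAt).const_mul lam)
  have hderiv : ∀ s : ℝ, deriv (creaseL ζ lam mu) s
      = v3 (sigL ζ lam s) (deriv ζ s) (lam * deriv ζ s) := fun s => (hder s).deriv
  refine ⟨?_, ⟨?_, ?_⟩, ?_, ?_, ?_⟩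
  · -- unit speed
    intro s hs
    rw [hderiv s, EuclideanSpace.norm_eq]
    have h1 : sigL ζ lam s ^ 2 = 1 - (1 + lam ^ 2) * (deriv ζ s) ^ 2 :=
      Real.sq_sqrt (hlam s hs).le
    have : ∑ i, ‖(v3 (sigL ζ lam s) (deriv ζ s) (lam * deriv ζ s)) i‖ ^ 2 = 1 := by
      simp only [Fin.sum_univ_three, v3, Matrix.cons_val_zero, Matrix.cons_val_one,
        Matrix.head_cons, Matrix.cons_val_two, Matrix.tail_cons, Real.norm_eq_abs, sq_abs]
      rw [h1]; ring
    rw [this, Real.sqrt_one]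
  · -- norm xiL
    rw [EuclideanSpace.norm_eq]
    have : ∑ i, ‖(xiL lam) i‖ ^ 2 = 1 := by
      simp only [Fin.sum_univ_three, xiL, v3, PiLp.smul_apply, smul_eq_mul,
        Matrix.cons_val_zero, Matrix.cons_val_one, Matrix.head_cons, Matrix.cons_val_two,
        Matrix.tail_cons, Real.norm_eq_abs, sq_abs]
      field_simp
      ring
    rw [this, Real.sqrt_one]
  · -- inner products
    intro s hs
    constructor
    · rw [hderiv s]
      simp only [PiLp.inner_apply, RCLike.inner_apply, conj_trivial, Fin.sum_univ_three,
        xiL, v3, PiLp.smul_apply, smul_eq_mul, Matrix.cons_val_zero, Matrix.cons_val_one,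
        Matrix.head_cons, Matrix.cons_val_two, Matrix.tail_cons]
      field_simp
      ring
    · rw [hderiv s]
      simp only [PiLp.inner_apply, RCLike.inner_apply, conj_trivial, Fin.sum_univ_three,
        v3, Matrix.cons_val_zero, Matrix.cons_val_one, Matrix.head_cons,
        Matrix.cons_val_two, Matrix.tail_cons]
      ring
  · -- endpoints
    refine ⟨?_, ?_, ?_, ?_⟩ <;>
      simp [creaseL, v3, hζ0, hζL]
  · -- lam = 1, mu = 0
    rintro ⟨rfl, rfl⟩
    constructor
    · intro s
      have hsig : sigL ζ 1 = sig ζ := by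
        funext w; simp only [sigL, sig]; norm_num
      simp [creaseL, crease, hsig]
    · ext i
      fin_cases i <;> simp [xiL, v3] <;> norm_num
  · -- lam = 0, mu = 0
    rintro ⟨rfl, rfl⟩
    constructor
    · intro s
      have hsig : sigL ζ 0 = fun w => Real.sqrt (1 - (deriv ζ w) ^ 2) := by
        funext w; simp [sigL]
      simp [creaseL, pattern, hsig]
    · ext i
      fin_cases i <;> simp [xiL, v3]
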